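/- arXiv:2405.17516 — 2 statements merged into one kernel-verified Lean document; each statement's English description precedes it below -/
import Mathlib

section
/- Proposition 3 (KDTW is positive definite): Let k be a positive definite kernel on a set X, let m be a positive integer, let U be a set, and let C be a finite index set such that to each π ∈ C are associated two maps φ_{π,1}, φ_{π,2} : U → (Fin m → X). Then the kernel KDTW(x, y) = ∑_{π ∈ C} ∑_{f ∈ {φ_{π,1}, φ_{π,2}}} ∑_{g ∈ {φ_{π,1}, φ_{π,2}}} ∏_{l=0}^{m−1} k( (f x)(l), (g y)(l) ) is a positive definite kernel on U. -/
/-- A kernel `K : X → X → ℝ` is positive definite if it is symmetric and for every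
finite family of points `x₁,…,x_N` and real coefficients `c₁,…,c_N`,
`∑_{i,j} c_i c_j K(x_i, x_j) ≥ 0`. -/
def IsPDKernel {X : Type*} (K : X → X → ℝ) : Prop :=
  (∀ x y : X, K x y = K y x) ∧
  ∀ (N : ℕ) (x : Fin N → X) (c : Fin N → ℝ),
    0 ≤ ∑ i : Fin N, ∑ j : Fin N, c i * c j * K (x i) (x j)

/-!
A positive definite kernel on `X` is the same thing as a positive semidefinite matrix indexed by
`X`, so the Schur product theorem makes pointwise products of such kernels positive definite;
sums and pullbacks are immediate. Hence `(a, b) ↦ ∏ₗ k (a l) (b l)` is positive definite on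
`Fin m → X`, and summing it over both projections of `x` and of `y` is again positive definite:
its quadratic form on `x₁, …, x_N` with coefficients `cᵢ` is the quadratic form on the `2N`
points `φ f xᵢ` with coefficients `cᵢ`.
-/

namespace IsPDKernel

variable {X U : Type*} {K K₁ K₂ : X → X → ℝ}

theorem sum_sum_mul_nonneg (hK : IsPDKernel K) {ι : Type*} [Fintype ι] (x : ι → X)
    (c : ι → ℝ) : 0 ≤ ∑ i, ∑ j, c i * c j * K (x i) (x j) := by
  let e := (Fintype.equivFin ι).symm
  calc 0 ≤ ∑ i, ∑ j, c (e i) * c (e j) * K (x (e i)) (x (e j)) := hK.2 _ _ _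
    _ = ∑ i, ∑ j, c i * c j * K (x i) (x j) :=
      Fintype.sum_equiv e _ _ fun i => Fintype.sum_equiv e _ _ fun j => rfl

theorem _root_.isPDKernel_iff_posSemidef :
    IsPDKernel K ↔ (Matrix.of K).PosSemidef := by
  constructor
  · intro hK
    refine ⟨funext₂ fun x y => (hK.1 x y).symm, fun c => ?_⟩
    simp only [Finsupp.sum, star_trivial, Matrix.of_apply, ← Finset.sum_coe_sort c.support]
    simpa [mul_right_comm] using hK.sum_sum_mul_nonneg ((↑) : c.support → X) (c ∘ (↑))
  · intro hK
    refine ⟨fun x y => congrFun₂ hK.1 y x, fun N x c => ?_⟩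
    simpa [dotProduct, Matrix.mulVec, Finset.mul_sum, mul_comm, mul_left_comm] using
      (hK.submatrix x).dotProduct_mulVec_nonneg c

theorem comp (hK : IsPDKernel K) (F : U → X) : IsPDKernel fun u v => K (F u) (F v) :=
  ⟨fun _ _ => hK.1 _ _, fun N x => hK.2 N (F ∘ x)⟩

theorem const_one : IsPDKernel fun _ _ : X => (1 : ℝ) :=
  ⟨fun _ _ => rfl, fun N _ c => by simpa [sq, Finset.sum_mul_sum] using sq_nonneg (∑ i, c i)⟩

theorem mul (h₁ : IsPDKernel K₁) (h₂ : IsPDKernel K₂) : IsPDKernel fun x y => K₁ x y * K₂ x y :=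
  isPDKernel_iff_posSemidef.2 <|
    (isPDKernel_iff_posSemidef.1 h₁).hadamard (isPDKernel_iff_posSemidef.1 h₂)

theorem finset_sum {ι : Type*} {K : ι → X → X → ℝ} (s : Finset ι)
    (h : ∀ i ∈ s, IsPDKernel (K i)) : IsPDKernel fun x y => ∑ i ∈ s, K i x y := by
  rw [isPDKernel_iff_posSemidef]
  convert Matrix.posSemidef_sum s fun i hi => isPDKernel_iff_posSemidef.1 (h i hi)
  ext x y
  simp [Matrix.sum_apply]

theorem finset_prod_pi {ι : Type*} (hK : IsPDKernel K) (s : Finset ι) :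
    IsPDKernel fun a b : ι → X => ∏ l ∈ s, K (a l) (b l) := by
  induction s using Finset.cons_induction with
  | empty => simpa using const_one
  | cons l s hl ih => simpa [Finset.prod_cons] using (hK.comp fun a : ι → X => a l).mul ih

theorem sum_sum_comp (hK : IsPDKernel K) {ι : Type*} [Fintype ι] (ψ : ι → U → X) :
    IsPDKernel fun x y => ∑ f, ∑ g, K (ψ f x) (ψ g y) := by
  refine ⟨fun x y => ?_, fun N x c => ?_⟩
  · dsimp only
    rw [Finset.sum_comm]
    simp only [hK.1 (ψ _ x)]
  · have h := hK.sum_sum_mul_nonneg (fun p : Fin N × ι => ψ p.2 (x p.1)) (fun p => c p.1)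
    simp_rw [Fintype.sum_prod_type, ← Finset.mul_sum] at h
    refine h.trans_eq (Finset.sum_congr rfl fun i _ => ?_)
    rw [Finset.sum_comm]
    simp only [Finset.mul_sum]

end IsPDKernel

theorem isPDKernel_kdtw_general {X U : Type*} (k : X → X → ℝ) (hk : IsPDKernel k)
    (m : ℕ) {C : Type*} [Fintype C]
    (φ : C → Fin 2 → U → (Fin m → X)) :
    IsPDKernel (fun x y : U =>
      ∑ π : C, ∑ f : Fin 2, ∑ g : Fin 2,
        ∏ l : Fin m, k (φ π f x l) (φ π g y l)) :=
  IsPDKernel.finset_sum Finset.univ fun π _ => (hk.finset_prod_pi Finset.univ).sum_sum_comp (φ π)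

/-- Proposition 3 (KDTW is positive definite): if `k` is a positive definite kernel on
`X`, `m > 0`, and to each element `π` of a finite index set `C` are associated two maps
`φ π 0, φ π 1 : U → (Fin m → X)`, then
`KDTW(x,y) = ∑_{π ∈ C} ∑_{f,g ∈ {φ π 0, φ π 1}} ∏_{l} k((f x)(l), (g y)(l))`
is a positive definite kernel on `U`. -/
theorem isPDKernel_kdtw {X U : Type*} (k : X → X → ℝ) (hk : IsPDKernel k)
    (m : ℕ) (hm : 0 < m) {C : Type*} [Fintype C]
    (φ : C → Fin 2 → U → (Fin m → X)) :
    IsPDKernel (fun x y : U =>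
      ∑ π : C, ∑ f : Fin 2, ∑ g : Fin 2,
        ∏ l : Fin m, k (φ π f x l) (φ π g y l)) :=
  isPDKernel_kdtw_general k hk m φ
end

section
/- Forward–backward factorization: let w : ℕ × ℕ → ℝ be a weight function on grid cells, fix n, m and a cell (i,j) with i ≤ n and j ≤ m, and define F(i,j) = ∑_π ∏_{l} w(π(l)) over all alignment paths π from (0,0) to (i,j), B(i,j) = ∑_σ ∏_{l} w(σ(l)) over all alignment paths σ from (i,j) to (n,m), and S(i,j) = ∑_ρ ∏_{l} w(ρ(l)) over all alignment paths ρ from (0,0) to (n,m) that visit the cell (i,j). Then F(i,j) · B(i,j) = w(i,j) · S(i,j). -/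
/-- `IsAlignPath a b π` : the list of grid cells `π` is an alignment path from `a` to
`b`, i.e. it is nonempty, starts at `a`, ends at `b`, and each increment between
consecutive cells belongs to `{(1,0), (0,1), (1,1)}`. -/
def IsAlignPath (a b : ℕ × ℕ) (π : List (ℕ × ℕ)) : Prop :=
  π.head? = some a ∧ π.getLast? = some b ∧
  π.Chain' (fun u v : ℕ × ℕ => v = u + (1, 0) ∨ v = u + (0, 1) ∨ v = u + (1, 1))

/-!
Concatenation at the common cell, `(π, σ) ↦ π ++ σ.tail`, is a bijection from pairs of paths
`(0,0) → (i,j) → (n,m)` onto the paths `(0,0) → (n,m)` through `(i,j)`: every step strictly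
increases a cell in the product order, so a path visits `(i,j)` at most once and the splitting
point is unique. The weight of `(i,j)` is counted in both factors but only once in the
concatenation, which gives the factor `w (i,j)`.
-/

theorem List.finite_nodup_forall_mem {α : Type*} {s : Set α} (hs : s.Finite) :
    {l : List α | l.Nodup ∧ ∀ x ∈ l, x ∈ s}.Finite := by
  have := hs.to_subtype
  have := Fintype.ofFinite s
  refine ((List.finite_length_le s (Fintype.card s)).image (List.map Subtype.val)).subset ?_
  rintro l ⟨hnd, hl⟩
  lift l to List s using hl
  exact ⟨l, (hnd.of_map _).length_le_card, rfl⟩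

theorem finsum_mem_mul_finsum_mem {α β R : Type*} [NonUnitalNonAssocSemiring R]
    {s : Set α} {t : Set β} (hs : s.Finite) (ht : t.Finite) (f : α → R) (g : β → R) :
    (∑ᶠ a ∈ s, f a) * (∑ᶠ b ∈ t, g b) = ∑ᶠ p ∈ s ×ˢ t, f p.1 * g p.2 := by
  classical
  rw [finsum_mem_eq_finite_toFinset_sum _ hs, finsum_mem_eq_finite_toFinset_sum _ ht,
    finsum_mem_eq_finite_toFinset_sum _ (hs.prod ht), Finset.sum_mul_sum,
    ← Set.Finite.toFinset_prod, Finset.sum_product]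

def AlignStep (u v : ℕ × ℕ) : Prop :=
  v = u + (1, 0) ∨ v = u + (0, 1) ∨ v = u + (1, 1)

theorem AlignStep.lt {u v : ℕ × ℕ} (h : AlignStep u v) : u < v := by
  rcases h with rfl | rfl | rfl <;> simp [Prod.lt_iff]

theorem isAlignPath_iff {a b : ℕ × ℕ} {π : List (ℕ × ℕ)} :
    IsAlignPath a b π ↔ π.head? = some a ∧ π.getLast? = some b ∧ π.IsChain AlignStep :=
  Iff.rfl

namespace IsAlignPath

variable {a b c : ℕ × ℕ} {π : List (ℕ × ℕ)}

theorem isChain (h : IsAlignPath a b π) : π.IsChain AlignStep := (isAlignPath_iff.mp h).2.2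

theorem pairwise_lt (h : IsAlignPath a b π) : π.Pairwise (· < ·) :=
  List.isChain_iff_pairwise.mp (h.isChain.imp fun _ _ => AlignStep.lt)

theorem nodup (h : IsAlignPath a b π) : π.Nodup :=
  h.pairwise_lt.imp ne_of_lt

theorem exists_eq_cons (h : IsAlignPath a b π) : ∃ t, π = a :: t :=
  List.head?_eq_some_iff.mp h.1

theorem exists_eq_append_singleton (h : IsAlignPath a b π) : ∃ s, π = s ++ [b] :=
  List.getLast?_eq_some_iff.mp h.2.1

theorem le_of_mem (h : IsAlignPath a b π) {x : ℕ × ℕ} (hx : x ∈ π) : x ≤ b := by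
  obtain ⟨s, rfl⟩ := h.exists_eq_append_singleton
  rcases List.mem_append.mp hx with hx | hx
  · exact (List.pairwise_append.mp h.pairwise_lt).2.2 x hx b (by simp) |>.le
  · simp_all

end IsAlignPath

theorem finite_setOf_isAlignPath (a b : ℕ × ℕ) : {π | IsAlignPath a b π}.Finite :=
  (List.finite_nodup_forall_mem (Set.finite_Iic b)).subset fun _ h =>
    ⟨h.nodup, fun _ => h.le_of_mem⟩

theorem isAlignPath_append_cons_iff {a b c : ℕ × ℕ} {s t : List (ℕ × ℕ)} :
    IsAlignPath a b (s ++ c :: t) ↔ IsAlignPath a c (s ++ [c]) ∧ IsAlignPath c b (c :: t) := by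
  have hhead : (s ++ c :: t).head? = (s ++ [c]).head? := by cases s <;> rfl
  rw [isAlignPath_iff, isAlignPath_iff, isAlignPath_iff, List.isChain_split, hhead,
    List.getLast?_append_of_ne_nil _ (List.cons_ne_nil c t)]
  exact ⟨fun ⟨hh, hl, hs, ht⟩ => ⟨⟨hh, by simp, hs⟩, rfl, hl, ht⟩,
    fun ⟨⟨hh, _, hs⟩, _, hl, ht⟩ => ⟨hh, hl, hs, ht⟩⟩

theorem bijOn_append_tail (a b c : ℕ × ℕ) :
    Set.BijOn (fun p : List (ℕ × ℕ) × List (ℕ × ℕ) => p.1 ++ p.2.tail)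
      ({π | IsAlignPath a c π} ×ˢ {σ | IsAlignPath c b σ})
      {ρ | IsAlignPath a b ρ ∧ c ∈ ρ} := by
  refine ⟨?mapsTo, ?injOn, ?surjOn⟩
  case mapsTo =>
    rintro ⟨π, σ⟩ ⟨hπ : IsAlignPath a c π, hσ : IsAlignPath c b σ⟩
    obtain ⟨s, rfl⟩ := hπ.exists_eq_append_singleton
    obtain ⟨t, rfl⟩ := hσ.exists_eq_cons
    refine ⟨?_, by simp⟩
    simpa using isAlignPath_append_cons_iff.mpr ⟨hπ, hσ⟩
  case injOn =>
    rintro ⟨π, σ⟩ ⟨hπ : IsAlignPath a c π, hσ : IsAlignPath c b σ⟩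
      ⟨π', σ'⟩ ⟨hπ' : IsAlignPath a c π', hσ' : IsAlignPath c b σ'⟩ heq
    obtain ⟨s, rfl⟩ := hπ.exists_eq_append_singleton
    obtain ⟨t, rfl⟩ := hσ.exists_eq_cons
    obtain ⟨s', rfl⟩ := hπ'.exists_eq_append_singleton
    obtain ⟨t', rfl⟩ := hσ'.exists_eq_cons
    have hs : c ∉ s := fun hc => (List.nodup_append.mp hπ.nodup).2.2 c hc c (by simp) rfl
    have ht : c ∉ t := (List.nodup_cons.mp hσ.nodup).1
    simp only [List.tail_cons, List.append_assoc, List.singleton_append] at heq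
    obtain ⟨rfl, -, rfl⟩ := (List.append_cons_inj_of_notMem hs ht).mp heq
    rfl
  case surjOn =>
    rintro ρ ⟨hρ, hc⟩
    obtain ⟨s, t, rfl⟩ := List.append_of_mem hc
    obtain ⟨hs, ht⟩ := isAlignPath_append_cons_iff.mp hρ
    exact ⟨(s ++ [c], c :: t), ⟨hs, ht⟩, by simp⟩

theorem forward_backward_factorization_general (w : ℕ × ℕ → ℝ) (n m i j : ℕ) :
    (∑ᶠ π ∈ {π : List (ℕ × ℕ) | IsAlignPath (0, 0) (i, j) π}, (π.map w).prod) *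
      (∑ᶠ σ ∈ {σ : List (ℕ × ℕ) | IsAlignPath (i, j) (n, m) σ}, (σ.map w).prod) =
    w (i, j) *
      ∑ᶠ ρ ∈ {ρ : List (ℕ × ℕ) | IsAlignPath (0, 0) (n, m) ρ ∧ (i, j) ∈ ρ},
        (ρ.map w).prod := by
  rw [finsum_mem_mul_finsum_mem (finite_setOf_isAlignPath _ _) (finite_setOf_isAlignPath _ _),
    mul_finsum_mem]
  refine finsum_mem_eq_of_bijOn _ (bijOn_append_tail _ _ _) ?_
  rintro ⟨π, σ⟩ ⟨-, hσ : IsAlignPath (i, j) (n, m) σ⟩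
  obtain ⟨t, rfl⟩ := hσ.exists_eq_cons
  simp only [List.map_append, List.map_cons, List.prod_append, List.prod_cons, List.tail_cons]
  ring

/-- Forward–backward factorization: with `w : ℕ × ℕ → ℝ` a weight function on grid
cells and a cell `(i,j)` with `i ≤ n`, `j ≤ m`, letting
`F(i,j) = ∑_π ∏_l w(π(l))` over alignment paths from `(0,0)` to `(i,j)`,
`B(i,j) = ∑_σ ∏_l w(σ(l))` over alignment paths from `(i,j)` to `(n,m)`, and
`S(i,j) = ∑_ρ ∏_l w(ρ(l))` over alignment paths from `(0,0)` to `(n,m)` that visit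
`(i,j)`, one has `F(i,j) · B(i,j) = w(i,j) · S(i,j)`. -/
theorem forward_backward_factorization (w : ℕ × ℕ → ℝ) (n m i j : ℕ)
    (hi : i ≤ n) (hj : j ≤ m) :
    (∑ᶠ π ∈ {π : List (ℕ × ℕ) | IsAlignPath (0, 0) (i, j) π}, (π.map w).prod) *
      (∑ᶠ σ ∈ {σ : List (ℕ × ℕ) | IsAlignPath (i, j) (n, m) σ}, (σ.map w).prod) =
    w (i, j) *
      ∑ᶠ ρ ∈ {ρ : List (ℕ × ℕ) | IsAlignPath (0, 0) (n, m) ρ ∧ (i, j) ∈ ρ},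
        (ρ.map w).prod :=
  forward_backward_factorization_general w n m i j
end
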